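/- For a directed cycle C of length n ≥ 3, the number p of distinct complete dominance graphs reachable from C by making exactly k = 1 + (n-2)(n-1)/2 edge additions/removals (the minimum number) is p = n. -/

import Mathlib

def cycleEdges (n : ℕ) : Finset (Fin n × Fin n) :=
  Finset.univ.image (fun i : Fin n => (i, finRotate n i))

def domEdges {n : ℕ} (σ : Equiv.Perm (Fin n)) : Finset (Fin n × Fin n) :=
  Finset.univ.filter (fun p => σ p.1 < σ p.2)

def IsDom {n : ℕ} (E : Finset (Fin n × Fin n)) : Prop :=
  ∃ σ : Equiv.Perm (Fin n), E = domEdges σ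

section Aux

variable {n : ℕ}

open Fin.CommRing

/-- A strictly monotone permutation of `Fin n` is the identity. -/
lemma perm_eq_one_of_strictMono (σ : Equiv.Perm (Fin n)) (h : StrictMono σ) : σ = 1 := by
  have h2 : StrictMono (id : Fin n → Fin n) := strictMono_id
  have hr : Set.range (⇑σ) = Set.range (id : Fin n → Fin n) := by
    simp [σ.surjective.range_eq]
  have h3 : (⇑σ) = (id : Fin n → Fin n) :=
    (@StrictMono.range_inj (Fin n) (Fin n) _ _ (inferInstance : WellFoundedLT (Fin n)) _ _
      h h2).1 hr
  exact Equiv.ext fun i => congrFun h3 i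

lemma domEdges_injective : Function.Injective (domEdges (n := n)) := by
  intro σ τ h
  have key : ∀ a b : Fin n, σ a < σ b ↔ τ a < τ b := by
    intro a b
    have := Finset.ext_iff.1 h (a, b)
    simpa [domEdges] using this
  have hsm : StrictMono (σ.symm.trans τ) := by
    intro x y hxy
    simp only [Equiv.trans_apply]
    rw [← key]
    simpa using hxy
  have h1 := perm_eq_one_of_strictMono _ hsm
  refine Equiv.ext fun i => ?_
  have h2 := Equiv.ext_iff.1 h1 (σ i)
  simpa using h2.symm

lemma domEdges_card (σ : Equiv.Perm (Fin n)) :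
    2 * (domEdges σ).card = n * n - n := by
  classical
  set B : Finset (Fin n × Fin n) := Finset.univ.filter (fun p => σ p.2 < σ p.1) with hB
  have hAB : (domEdges σ).card = B.card := by
    apply Finset.card_bij (fun p _ => Prod.swap p)
    · intro p hp
      simp only [domEdges, Finset.mem_filter, Finset.mem_univ, true_and] at hp
      simp [hB, hp]
    · intro p _ q _ hpq
      exact Prod.swap_injective hpq
    · intro p hp
      simp only [hB, Finset.mem_filter, Finset.mem_univ, true_and] at hp
      exact ⟨Prod.swap p, by simp [domEdges, hp], by simp⟩
  have hdisj : Disjoint (domEdges σ) B := by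
    rw [Finset.disjoint_left]
    intro p hp hq
    simp only [domEdges, hB, Finset.mem_filter, Finset.mem_univ, true_and] at hp hq
    exact absurd hq (not_lt_of_gt hp)
  have hunion : domEdges σ ∪ B = Finset.univ.offDiag := by
    ext p
    simp only [domEdges, hB, Finset.mem_union, Finset.mem_filter, Finset.mem_univ, true_and,
      Finset.mem_offDiag]
    rw [lt_or_lt_iff_ne]
    simp
  have hcard := Finset.card_union_of_disjoint hdisj
  rw [hunion, Finset.offDiag_card, ← hAB, Finset.card_univ, Fintype.card_fin] at hcard
  omega

lemma cycleEdges_card : (cycleEdges n).card = n := by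
  rw [cycleEdges, Finset.card_image_of_injective _ (fun a b hab => by
    simpa using congrArg Prod.fst hab), Finset.card_univ, Fintype.card_fin]

def ascents (σ : Equiv.Perm (Fin n)) : Finset (Fin n) :=
  Finset.univ.filter (fun i => σ i < σ (finRotate n i))

lemma inter_card (σ : Equiv.Perm (Fin n)) :
    (cycleEdges n ∩ domEdges σ).card = (ascents σ).card := by
  have h : cycleEdges n ∩ domEdges σ
      = (ascents σ).image (fun i => (i, finRotate n i)) := by
    ext p
    simp only [Finset.mem_inter, cycleEdges, domEdges, ascents, Finset.mem_image,
      Finset.mem_filter, Finset.mem_univ, true_and]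
    constructor
    · rintro ⟨⟨i, rfl⟩, h2⟩
      exact ⟨i, h2, rfl⟩
    · rintro ⟨i, h2, rfl⟩
      exact ⟨⟨i, rfl⟩, h2⟩
  rw [h, Finset.card_image_of_injective _ (fun a b hab => by
    simpa using congrArg Prod.fst hab)]

lemma card_symmDiff_add (s t : Finset (Fin n × Fin n)) :
    (symmDiff s t).card + 2 * (s ∩ t).card = s.card + t.card := by
  classical
  have h1 : (symmDiff s t) ∪ (s ∩ t) = s ∪ t := by
    simpa [Finset.sup_eq_union, Finset.inf_eq_inter] using symmDiff_sup_inf (a := s) (b := t)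
  have h2 : Disjoint (symmDiff s t) (s ∩ t) := disjoint_symmDiff_inf s t
  calc (symmDiff s t).card + 2 * (s ∩ t).card
      = ((symmDiff s t).card + (s ∩ t).card) + (s ∩ t).card := by ring
    _ = ((symmDiff s t) ∪ (s ∩ t)).card + (s ∩ t).card :=
        by rw [Finset.card_union_of_disjoint h2]
    _ = (s ∪ t).card + (s ∩ t).card := by rw [h1]
    _ = s.card + t.card := Finset.card_union_add_card_inter s t

lemma lt_add_one_iff_ne_last {m : ℕ} (j : Fin (m + 1)) :
    j < j + 1 ↔ j ≠ Fin.last m := by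
  constructor
  · intro h he
    subst he
    rw [Fin.lt_iff_val_lt_val, Fin.val_add_one] at h
    simp at h
  · intro h
    have hlt : (j : ℕ) < m := Fin.val_lt_last h
    rw [Fin.lt_iff_val_lt_val, Fin.val_add_one, if_neg h]
    omega

lemma ascents_addRight (m : ℕ) (c : Fin (m + 1)) :
    (ascents (Equiv.addRight c)).card = m := by
  have h : ascents (Equiv.addRight c) = Finset.univ.erase (Fin.last m - c) := by
    ext i
    simp only [ascents, Finset.mem_filter, Finset.mem_univ, true_and, finRotate_succ_apply,
      Equiv.coe_addRight, Finset.mem_erase, and_true]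
    have h1 : i + 1 + c = (i + c) + 1 := by ring
    rw [h1, lt_add_one_iff_ne_last]
    constructor
    · intro h2 he
      exact h2 (by rw [he]; ring)
    · intro h2 he
      exact h2 (by rw [← he]; ring)
  rw [h, Finset.card_erase_of_mem (Finset.mem_univ _), Finset.card_univ, Fintype.card_fin]
  omega

lemma eq_addRight_of_ascents (m : ℕ) (σ : Equiv.Perm (Fin (m + 1)))
    (h : (ascents σ).card = m) : ∃ c, σ = Equiv.addRight c := by
  have hD : (Finset.univ \ ascents σ).card = 1 := by
    rw [Finset.card_sdiff_of_subset (Finset.subset_univ _), Finset.card_univ, Fintype.card_fin, h]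
    omega
  obtain ⟨i₀, hi₀⟩ := Finset.card_eq_one.1 hD
  have hasc : ∀ i : Fin (m + 1), i ≠ i₀ → σ i < σ (i + 1) := by
    intro i hi
    by_contra hcon
    have hmem : i ∈ Finset.univ \ ascents σ := by
      simp [ascents, finRotate_succ_apply, hcon]
    rw [hi₀, Finset.mem_singleton] at hmem
    exact hi hmem
  refine ⟨-(i₀ + 1), ?_⟩
  have hsm : StrictMono ((Equiv.addRight (i₀ + 1)).trans σ) := by
    rw [Fin.strictMono_iff_lt_succ]
    intro j
    simp only [Equiv.trans_apply, Equiv.coe_addRight]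
    have h1 : (j.succ : Fin (m + 1)) + (i₀ + 1) = (j.castSucc + (i₀ + 1)) + 1 := by
      rw [← Fin.coeSucc_eq_succ]; ring
    rw [h1]
    apply hasc
    intro he
    have h2 : (j.castSucc : Fin (m + 1)) + 1 = 0 := by
      have h' : j.castSucc + (i₀ + 1) - i₀ = i₀ - i₀ := by rw [he]
      rw [sub_self] at h'
      rw [← h']
      ring
    rw [Fin.coeSucc_eq_succ] at h2
    exact Fin.succ_ne_zero j h2
  have h1 := perm_eq_one_of_strictMono _ hsm
  refine Equiv.ext fun i => ?_
  have h2 := Equiv.ext_iff.1 h1 (i + -(i₀ + 1))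
  simp only [Equiv.trans_apply, Equiv.coe_addRight, Equiv.Perm.coe_one, id_eq] at h2
  have h3 : i + -(i₀ + 1) + (i₀ + 1) = i := by ring
  rw [h3] at h2
  simpa [add_assoc] using h2

end Aux

/-- the number of distinct complete dominance graphs reachable from the
directed cycle of length `n ≥ 3` by exactly `k = 1 + (n-2)(n-1)/2` edge changes is `n`. -/
theorem cycle_num_closest_dominance_graphs (n : ℕ) (hn : 3 ≤ n) :
    {E : Finset (Fin n × Fin n) | IsDom E ∧
        (symmDiff (cycleEdges n) E).card = 1 + (n - 2) * (n - 1) / 2}.ncard = n := by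
  obtain ⟨l, rfl⟩ : ∃ l, n = l + 2 + 1 := ⟨n - 3, by omega⟩
  set m := l + 2 with hm
  have key : ∀ σ : Equiv.Perm (Fin (m + 1)),
      (symmDiff (cycleEdges (m + 1)) (domEdges σ)).card
        = 1 + (m + 1 - 2) * (m + 1 - 1) / 2 ↔ (ascents σ).card = m := by
    intro σ
    have h1 := card_symmDiff_add (cycleEdges (m + 1)) (domEdges σ)
    rw [inter_card, cycleEdges_card] at h1
    have h2 := domEdges_card σ (n := m + 1)
    have e0 : m + 1 - 2 = l + 1 := by omega
    have e0' : m + 1 - 1 = l + 2 := by omega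
    rw [e0, e0']
    obtain ⟨X, hX⟩ : ∃ X, (l + 1) * (l + 2) = X := ⟨_, rfl⟩
    have e1 : (m + 1) * (m + 1) - (m + 1) = X + 2 * (l + 2) := by
      have : (m + 1) * (m + 1) = (m + 1) + ((l + 1) * (l + 2) + 2 * (l + 2)) := by
        rw [hm]; ring
      omega
    rw [hX]
    rw [e1] at h2
    omega
  have hset : {E : Finset (Fin (m + 1) × Fin (m + 1)) | IsDom E ∧
        (symmDiff (cycleEdges (m + 1)) E).card = 1 + (m + 1 - 2) * (m + 1 - 1) / 2}
      = ↑(Finset.univ.image (fun c : Fin (m + 1) => domEdges (Equiv.addRight c))) := by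
    ext E
    simp only [Set.mem_setOf_eq, Finset.coe_image, Set.mem_image, Finset.mem_coe,
      Finset.coe_univ, Set.image_univ, Set.mem_range]
    constructor
    · rintro ⟨⟨σ, rfl⟩, hcard⟩
      obtain ⟨c, rfl⟩ := eq_addRight_of_ascents m σ ((key σ).1 hcard)
      exact ⟨c, rfl⟩
    · rintro ⟨c, rfl⟩
      exact ⟨⟨_, rfl⟩, (key _).2 (ascents_addRight m c)⟩
  rw [hset, Set.ncard_coe_finset]
  rw [Finset.card_image_of_injective _ (fun a b hab => by
    have h1 := domEdges_injective hab
    have h2 := Equiv.ext_iff.1 h1 0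
    simpa using h2)]
  rw [Finset.card_univ, Fintype.card_fin]
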